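/- Let B > 0, C < 1, ε ≤ C, and M = ((1-C)·B·κ_n)^(1/(1-ε)) where κ_n = 1/(n(n+1)). Suppose u : D₁ → ℝ is C² on the open unit ball D₁ ⊆ ℝⁿ, u(x) > 0 for all x ∈ D₁, and u(x)·Δu(x) ≥ B·|u(x)|^(1+ε) + C·|∇u(x)|² for all x ∈ D₁. Then sup_{x ∈ D₁} u(x) > M. -/

import Mathlib

noncomputable def lap {n : ℕ} (u : EuclideanSpace ℝ (Fin n) → ℝ)
    (x : EuclideanSpace ℝ (Fin n)) : ℝ :=
  ∑ i, iteratedFDeriv ℝ 2 u x ![EuclideanSpace.single i 1, EuclideanSpace.single i 1]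

/-!
Suppose `u ≤ M` on the ball and put `q = 1 - C > 0`. Since `q - 1 = -C`, the gradient terms cancel
in `Δ(u^q) = q u^(q-2) (u Δu - C |∇u|²) ≥ q B u^(ε-C)`, and `ε - C ≤ 0` turns this into
`Δ(u^q) ≥ c := q B M^(ε-C)`. At an interior maximum of `u^q - a |x|²` on a ball of radius `r < 1`,
where `2 n a < c`, the Laplacian of this function would be both nonpositive and positive. Hence
`c ≤ 2 n (sup u^q - u(0)^q) < 2 n M^q`; but `M^q = c / (n (n + 1))` and `2 n ≤ n (n + 1)`.
-/

open Filter Topology Metric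

theorem IsLocalMax.deriv_deriv_nonpos {f : ℝ → ℝ} {a : ℝ} (h : IsLocalMax f a)
    (hc : ContinuousAt f a) : deriv (deriv f) a ≤ 0 := by
  by_contra! hpos
  have hmin : IsLocalMin f a := isLocalMin_of_deriv_deriv_pos hpos h.deriv_eq_zero hc
  have hconst : f =ᶠ[𝓝 a] fun _ => f a :=
    (hmin.and h).mono fun x hx => le_antisymm hx.2 hx.1
  simp [hconst.deriv.deriv_eq] at hpos

def HasSecondDerivAt {F : Type*} [NormedAddCommGroup F] [NormedSpace ℝ F]
    (f f' : ℝ → F) (f'' : F) (a : ℝ) : Prop :=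
  (∀ᶠ t in 𝓝 a, HasDerivAt f (f' t) t) ∧ HasDerivAt f' f'' a

namespace HasSecondDerivAt

variable {F : Type*} [NormedAddCommGroup F] [NormedSpace ℝ F]

theorem deriv_deriv {f f' : ℝ → F} {f'' : F} {a : ℝ} (h : HasSecondDerivAt f f' f'' a) :
    deriv (deriv f) a = f'' := by
  have hderiv : deriv f =ᶠ[𝓝 a] f' := h.1.mono fun _ ht => ht.deriv
  rw [hderiv.deriv_eq, h.2.deriv]

theorem nonpos_of_isLocalMax {f f' : ℝ → ℝ} {f'' a : ℝ} (h : HasSecondDerivAt f f' f'' a)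
    (hmax : IsLocalMax f a) : f'' ≤ 0 :=
  h.deriv_deriv ▸ hmax.deriv_deriv_nonpos h.1.self_of_nhds.continuousAt

theorem sub {f f' g g' : ℝ → F} {f'' g'' : F} {a : ℝ} (hf : HasSecondDerivAt f f' f'' a)
    (hg : HasSecondDerivAt g g' g'' a) : HasSecondDerivAt (f - g) (f' - g') (f'' - g'') a :=
  ⟨(hf.1.and hg.1).mono fun _ h => h.1.sub h.2, hf.2.sub hg.2⟩

theorem const_mul {f f' : ℝ → ℝ} {f'' a : ℝ} (c : ℝ) (h : HasSecondDerivAt f f' f'' a) :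
    HasSecondDerivAt (fun t => c * f t) (fun t => c * f' t) (c * f'') a :=
  ⟨h.1.mono fun _ h => h.const_mul c, h.2.const_mul c⟩

theorem rpow_const {f f' : ℝ → ℝ} {f'' a : ℝ} (h : HasSecondDerivAt f f' f'' a)
    (hpos : 0 < f a) (q : ℝ) :
    HasSecondDerivAt (fun t => f t ^ q) (fun t => q * f t ^ (q - 1) * f' t)
      (q * (q - 1) * f a ^ (q - 2) * f' a ^ 2 + q * f a ^ (q - 1) * f'') a := by
  have hpos_nhds : ∀ᶠ t in 𝓝 a, 0 < f t :=
    h.1.self_of_nhds.continuousAt.eventually (lt_mem_nhds hpos)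
  refine ⟨(h.1.and hpos_nhds).mono fun t ht => ?_, ?_⟩
  · exact (ht.1.rpow_const (p := q) (Or.inl ht.2.ne')).congr_deriv (by ring)
  · refine (((h.1.self_of_nhds.rpow_const (p := q - 1) (Or.inl hpos.ne')).const_mul q).mul
      h.2).congr_deriv ?_
    rw [show q - 1 - 1 = q - 2 by ring]
    ring

end HasSecondDerivAt

section Line

variable {E : Type*} [NormedAddCommGroup E]

theorem hasDerivAt_add_smul [NormedSpace ℝ E] (z v : E) (t : ℝ) :
    HasDerivAt (fun t : ℝ => z + t • v) v t := by
  simpa using ((hasDerivAt_id t).smul_const v).const_add z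

theorem ContDiffOn.hasSecondDerivAt_comp_add_smul [NormedSpace ℝ E] {u : E → ℝ} {s : Set E}
    (hs : IsOpen s) (hu : ContDiffOn ℝ 2 u s) {z : E} (hz : z ∈ s) (v : E) :
    HasSecondDerivAt (fun t : ℝ => u (z + t • v)) (fun t => fderiv ℝ u (z + t • v) v)
      (fderiv ℝ (fderiv ℝ u) z v v) 0 := by
  have hmem : ∀ᶠ t in 𝓝 (0 : ℝ), z + t • v ∈ s :=
    (hasDerivAt_add_smul z v 0).continuousAt.preimage_mem_nhds (by simpa using hs.mem_nhds hz)
  have hdiff : DifferentiableAt ℝ (fderiv ℝ u) z :=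
    ((hu.fderiv_of_isOpen hs (m := 1) (by norm_num)).differentiableOn (by norm_num))
      |>.differentiableAt (hs.mem_nhds hz)
  refine ⟨hmem.mono fun t ht => ?_, ?_⟩
  · exact ((hu.differentiableOn (by norm_num)).differentiableAt
      (hs.mem_nhds ht)).hasFDerivAt.comp_hasDerivAt t (hasDerivAt_add_smul z v t)
  · have hfderiv :
        HasFDerivAt (fderiv ℝ u) (fderiv ℝ (fderiv ℝ u) z) (z + (0 : ℝ) • v) := by
      simpa using hdiff.hasFDerivAt
    exact (ContinuousLinearMap.apply ℝ ℝ v).hasFDerivAt.comp_hasDerivAt 0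
      (hfderiv.comp_hasDerivAt 0 (hasDerivAt_add_smul z v 0))

theorem hasSecondDerivAt_norm_sq_add_smul [InnerProductSpace ℝ E] (z v : E) (a : ℝ) :
    HasSecondDerivAt (fun t : ℝ => ‖z + t • v‖ ^ 2) (fun t => 2 * inner ℝ (z + t • v) v)
      (2 * ‖v‖ ^ 2) a := by
  refine ⟨Eventually.of_forall fun t => (hasDerivAt_add_smul z v t).norm_sq, ?_⟩
  simpa [real_inner_self_eq_norm_sq] using
    ((hasDerivAt_add_smul z v a).inner ℝ (hasDerivAt_const a v)).const_mul 2

end Line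

section Hessian

variable {E : Type*} [NormedAddCommGroup E] [InnerProductSpace ℝ E]

/-- The left-hand side is the second derivative of `u ^ q` at `z` in the direction `v`. -/
theorem IsLocalMax.hessian_rpow_le {u : E → ℝ} {s : Set E} (hs : IsOpen s)
    (hu : ContDiffOn ℝ 2 u s) {z : E} (hz : z ∈ s) (hpos : 0 < u z) {q a : ℝ}
    (hmax : IsLocalMax (fun x => u x ^ q - a * ‖x‖ ^ 2) z) (v : E) :
    q * (q - 1) * u z ^ (q - 2) * fderiv ℝ u z v ^ 2
      + q * u z ^ (q - 1) * fderiv ℝ (fderiv ℝ u) z v v ≤ 2 * a * ‖v‖ ^ 2 := by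
  have hline :=
    ((hu.hasSecondDerivAt_comp_add_smul hs hz v).rpow_const (by simpa using hpos) q).sub
      ((hasSecondDerivAt_norm_sq_add_smul z v 0).const_mul a)
  have hmax_line : IsLocalMax (fun t : ℝ => u (z + t • v) ^ q - a * ‖z + t • v‖ ^ 2) 0 :=
    IsLocalMax.comp_continuous (f := fun x => u x ^ q - a * ‖x‖ ^ 2) (by simpa using hmax)
      (hasDerivAt_add_smul z v 0).continuousAt
  have hsecond := hline.nonpos_of_isLocalMax hmax_line
  simp only [zero_smul, add_zero] at hsecond
  linarith

end Hessian

theorem lap_eq_sum_fderiv_fderiv {n : ℕ} (u : EuclideanSpace ℝ (Fin n) → ℝ)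
    (x : EuclideanSpace ℝ (Fin n)) :
    lap u x =
      ∑ i, fderiv ℝ (fderiv ℝ u) x (EuclideanSpace.single i 1) (EuclideanSpace.single i 1) := by
  simp [lap, iteratedFDeriv_two_apply]

theorem OrthonormalBasis.sum_sq_fderiv_eq_norm_gradient_sq {ι E : Type*} [Fintype ι]
    [NormedAddCommGroup E] [InnerProductSpace ℝ E] [CompleteSpace E] (b : OrthonormalBasis ι ℝ E)
    (u : E → ℝ) (x : E) :
    ∑ i, fderiv ℝ u x (b i) ^ 2 = ‖gradient u x‖ ^ 2 := by
  simp_rw [← toDual_gradient, InnerProductSpace.toDual_apply_apply, b.sum_sq_inner_left]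

theorem lap_rpow_le_of_isLocalMax {n : ℕ} {u : EuclideanSpace ℝ (Fin n) → ℝ}
    {s : Set (EuclideanSpace ℝ (Fin n))} (hs : IsOpen s) (hu : ContDiffOn ℝ 2 u s)
    {z : EuclideanSpace ℝ (Fin n)} (hz : z ∈ s) (hpos : 0 < u z) {q a : ℝ}
    (hmax : IsLocalMax (fun x => u x ^ q - a * ‖x‖ ^ 2) z) :
    q * (q - 1) * u z ^ (q - 2) * ‖gradient u z‖ ^ 2 + q * u z ^ (q - 1) * lap u z
      ≤ 2 * n * a := by
  have hdir (i : Fin n) := hmax.hessian_rpow_le hs hu hz hpos (EuclideanSpace.single i 1)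
  simp only [PiLp.norm_single, norm_one, one_pow, mul_one] at hdir
  have hsum := Finset.sum_le_sum fun i (_ : i ∈ Finset.univ) => hdir i
  rw [Finset.sum_add_distrib, ← Finset.mul_sum, ← Finset.mul_sum, Finset.sum_const,
    Finset.card_univ, Fintype.card_fin, nsmul_eq_mul, ← lap_eq_sum_fderiv_fderiv] at hsum
  rw [← (EuclideanSpace.basisFun (Fin n) ℝ).sum_sq_fderiv_eq_norm_gradient_sq]
  simpa [mul_comm, mul_left_comm, mul_assoc] using hsum

theorem exists_lt_mul_sq_of_two_mul_lt {m c : ℝ} (n : ℕ) (hm : 0 ≤ m) (h : 2 * n * m < c) :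
    ∃ r a : ℝ, 0 < r ∧ r < 1 ∧ m < a * r ^ 2 ∧ 2 * n * a < c := by
  set a := m + (c - 2 * n * m) / (2 * n + 1)
  have hδ : 0 < (c - 2 * n * m) / (2 * n + 1) := div_pos (by linarith) (by positivity)
  have ha : 2 * n * a < c := by
    have : (2 * n + 1) * ((c - 2 * n * m) / (2 * n + 1)) = c - 2 * n * m :=
      mul_div_cancel₀ _ (by positivity)
    nlinarith
  have hma : m / a < 1 := (div_lt_one (by linarith)).2 (by linarith)
  obtain ⟨ρ, hmρ, hρ1⟩ := exists_between hma
  have hρ : 0 < ρ := lt_of_le_of_lt (by positivity) hmρ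
  refine ⟨√ρ, a, Real.sqrt_pos.2 hρ, (Real.sqrt_lt' one_pos).2 (by simpa using hρ1), ?_, ha⟩
  rwa [Real.sq_sqrt hρ.le, ← div_lt_iff₀' (by linarith)]

/-- The right-hand side of `hlap` is `Δ(u ^ q) x`, expanded by the chain rule. -/
theorem le_two_mul_mul_sub_of_le_lap_rpow {n : ℕ} {u : EuclideanSpace ℝ (Fin n) → ℝ}
    {q c K : ℝ} (hu : ContDiffOn ℝ 2 u (ball 0 1)) (hpos : ∀ x ∈ ball 0 1, 0 < u x)
    (hK : ∀ x ∈ ball 0 1, u x ^ q ≤ K)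
    (hlap : ∀ x ∈ ball 0 1,
      c ≤ q * (q - 1) * u x ^ (q - 2) * ‖gradient u x‖ ^ 2 + q * u x ^ (q - 1) * lap u x) :
    c ≤ 2 * n * (K - u 0 ^ q) := by
  by_contra! hlt
  obtain ⟨r, a, hr0, hr1, hKr, hac⟩ :=
    exists_lt_mul_sq_of_two_mul_lt n (sub_nonneg.2 (hK 0 (mem_ball_self one_pos))) hlt
  have hsub : closedBall 0 r ⊆ ball (0 : EuclideanSpace ℝ (Fin n)) 1 :=
    closedBall_subset_ball hr1
  have hcont : ContinuousOn (fun x => u x ^ q - a * ‖x‖ ^ 2) (closedBall 0 r) :=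
    ((hu.continuousOn.mono hsub).rpow_const fun x hx => Or.inl (hpos x (hsub hx)).ne').sub
      (by fun_prop)
  have hsphere : ∀ x ∈ closedBall 0 r \ ball 0 r,
      u x ^ q - a * ‖x‖ ^ 2 < u 0 ^ q - a * ‖(0 : EuclideanSpace ℝ (Fin n))‖ ^ 2 := by
    rw [closedBall_sdiff_ball]
    intro x hx
    rw [mem_sphere_zero_iff_norm.1 hx, norm_zero]
    linarith [hK x (hsub (sphere_subset_closedBall hx))]
  obtain ⟨z, hz, hmax⟩ := (isCompact_closedBall 0 r).exists_isLocalMax_mem_open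
    ball_subset_closedBall hcont (mem_closedBall_self hr0.le) hsphere isOpen_ball
  have hz1 : z ∈ ball 0 1 := ball_subset_ball hr1.le hz
  linarith [hlap z hz1, lap_rpow_le_of_isLocalMax isOpen_ball hu hz1 (hpos z hz1) hmax]

theorem one_sub_mul_rpow_le_of_le_mul {w L G B C ε : ℝ} (hw : 0 < w) (hC : C < 1)
    (h : B * w ^ (1 + ε) + C * G ≤ w * L) :
    (1 - C) * B * w ^ (ε - C)
      ≤ (1 - C) * (1 - C - 1) * w ^ (1 - C - 2) * G + (1 - C) * w ^ (1 - C - 1) * L := by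
  have hweight : 0 ≤ (1 - C) * w ^ (1 - C - 2) := by have := sub_pos.2 hC; positivity
  have hε : w ^ (1 - C - 2) * w ^ (1 + ε) = w ^ (ε - C) := by
    rw [← Real.rpow_add hw]; ring_nf
  have hone : w ^ (1 - C - 2) * w = w ^ (1 - C - 1) := by
    rw [← Real.rpow_add_one hw.ne']; ring_nf
  linear_combination mul_le_mul_of_nonneg_left h hweight - (1 - C) * B * hε + (1 - C) * L * hone

theorem two_mul_mul_sub_lt {c η : ℝ} (n : ℕ) (hc : 0 < c) (hη : 0 < η) :
    2 * n * (c * (1 / (n * (n + 1))) - η) < c := by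
  rcases Nat.eq_zero_or_pos n with rfl | hn
  · simpa using hc
  · have hn1 : (1 : ℝ) ≤ n := by exact_mod_cast hn
    have hsimp : 2 * n * (c * (1 / (n * (n + 1)))) = c * (2 / (n + 1)) := by field_simp
    have htwo : 2 / ((n : ℝ) + 1) ≤ 1 := by rw [div_le_one (by positivity)]; linarith
    nlinarith [mul_le_of_le_one_right hc.le htwo]

theorem stmt16_general (n : ℕ) (B C ε : ℝ) (hB : 0 < B) (hC : C < 1) (hεC : ε ≤ C)
    (M : ℝ) (hM : M = ((1 - C) * B * (1 / (n * (n + 1)))) ^ (1 / (1 - ε)))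
    (u : EuclideanSpace ℝ (Fin n) → ℝ)
    (hC2 : ContDiffOn ℝ 2 u (Metric.ball 0 1))
    (hpos : ∀ x ∈ Metric.ball (0 : EuclideanSpace ℝ (Fin n)) 1, 0 < u x)
    (hineq : ∀ x ∈ Metric.ball (0 : EuclideanSpace ℝ (Fin n)) 1,
      u x * lap u x ≥ B * |u x| ^ (1 + ε) + C * ‖gradient u x‖ ^ 2) :
    ∃ x ∈ Metric.ball (0 : EuclideanSpace ℝ (Fin n)) 1, M < u x := by
  by_contra! hle
  have hu0 : 0 < u 0 := hpos 0 (mem_ball_self one_pos)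
  have hMpos : 0 < M := hu0.trans_le (hle 0 (mem_ball_self one_pos))
  have hq : 0 < 1 - C := by linarith
  set c := (1 - C) * B * M ^ (ε - C)
  have hK : M ^ (1 - C) = c * (1 / (n * (n + 1))) := by
    have hM' : M ^ (1 - ε) = (1 - C) * B * (1 / (n * (n + 1))) := by
      rw [hM, ← Real.rpow_mul (by positivity), one_div_mul_cancel (by linarith), Real.rpow_one]
    rw [show 1 - C = (1 - ε) + (ε - C) by ring, Real.rpow_add hMpos, hM']
    ring
  have hbound := le_two_mul_mul_sub_of_le_lap_rpow (c := c) hC2 hpos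
    (fun x hx => Real.rpow_le_rpow (hpos x hx).le (hle x hx) hq.le) fun x hx => by
      have hux := hpos x hx
      refine le_trans ?_
        (one_sub_mul_rpow_le_of_le_mul hux hC (by simpa [abs_of_pos hux] using hineq x hx))
      exact mul_le_mul_of_nonneg_left
        (Real.rpow_le_rpow_of_nonpos hux (hle x hx) (by linarith)) (by positivity)
  rw [hK] at hbound
  exact hbound.not_gt (two_mul_mul_sub_lt n (by positivity) (Real.rpow_pos_of_pos hu0 _))

theorem stmt16 (n : ℕ) (hn : 1 ≤ n) (B C ε : ℝ) (hB : 0 < B) (hC : C < 1) (hεC : ε ≤ C)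
    (M : ℝ) (hM : M = ((1 - C) * B * (1 / (n * (n + 1)))) ^ (1 / (1 - ε)))
    (u : EuclideanSpace ℝ (Fin n) → ℝ)
    (hC2 : ContDiffOn ℝ 2 u (Metric.ball 0 1))
    (hpos : ∀ x ∈ Metric.ball (0 : EuclideanSpace ℝ (Fin n)) 1, 0 < u x)
    (hineq : ∀ x ∈ Metric.ball (0 : EuclideanSpace ℝ (Fin n)) 1,
      u x * lap u x ≥ B * |u x| ^ (1 + ε) + C * ‖gradient u x‖ ^ 2) :
    ∃ x ∈ Metric.ball (0 : EuclideanSpace ℝ (Fin n)) 1, M < u x :=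
  stmt16_general n B C ε hB hC hεC M hM u hC2 hpos hineq
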